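/- Let I ⊆ ℝ be an open interval and x,y,t,a,b : I → ℝ smooth with a² + b² = 1 and ẋ² + ẏ² = 1 on I, and let η be the function associated to the straight ruled surface patch built from these data. If η(s,v) = 0 for all (s,v) ∈ I × ℝ, then: (i) the curve γ = (x,y,t) is horizontal, i.e. ṫ = 2(yẋ − xẏ) on I; (ii) (a(s), b(s)) = ±(ẋ(s), ẏ(s)) for every s ∈ I; and (iii) ẍ = ÿ = 0 on I, so that the projection of γ to the plane is a straight line. -/

import Mathlib

/-- The function η associated to a straight ruled surface patch built from
curve data x,y,t and ruling direction (a,b). -/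
noncomputable def eta (x y t a b : ℝ → ℝ) (p : ℝ × ℝ) : ℝ :=
  deriv t p.1 + 2 * (x p.1 * deriv y p.1 - y p.1 * deriv x p.1)
    + 4 * p.2 * (a p.1 * deriv y p.1 - b p.1 * deriv x p.1)
    + 2 * p.2 ^ 2 * (a p.1 * deriv b p.1 - b p.1 * deriv a p.1)

/-- if η vanishes identically on I × ℝ (with a² + b² = 1 and ẋ² + ẏ² = 1 on I),
then (i) γ = (x,y,t) is horizontal, (ii) (a,b) = ±(ẋ,ẏ) pointwise on I, and
(iii) ẍ = ÿ = 0 on I, so the projection of γ to the plane is a straight line. -/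
theorem stmt_3 (I : Set ℝ) (hI : IsOpen I)
    (x y t a b : ℝ → ℝ)
    (hx : ContDiff ℝ (⊤ : ℕ∞) x) (hy : ContDiff ℝ (⊤ : ℕ∞) y) (ht : ContDiff ℝ (⊤ : ℕ∞) t)
    (ha : ContDiff ℝ (⊤ : ℕ∞) a) (hb : ContDiff ℝ (⊤ : ℕ∞) b)
    (hab : ∀ s ∈ I, a s ^ 2 + b s ^ 2 = 1)
    (hunit : ∀ s ∈ I, deriv x s ^ 2 + deriv y s ^ 2 = 1)
    (heta : ∀ s ∈ I, ∀ v : ℝ, eta x y t a b (s, v) = 0) :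
    ∀ s ∈ I,
      deriv t s = 2 * (y s * deriv x s - x s * deriv y s) ∧
      ((a s = deriv x s ∧ b s = deriv y s) ∨ (a s = -deriv x s ∧ b s = -deriv y s)) ∧
      deriv (deriv x) s = 0 ∧ deriv (deriv y) s = 0 := by
  have hdx' : ContDiff ℝ ((⊤ : ℕ∞) : WithTop ℕ∞) (deriv x) :=
    (contDiff_infty_iff_deriv.mp (hx.of_le (by simp))).2
  have hdy' : ContDiff ℝ ((⊤ : ℕ∞) : WithTop ℕ∞) (deriv y) :=
    (contDiff_infty_iff_deriv.mp (hy.of_le (by simp))).2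
  -- key: a function vanishing on the open set I has zero derivative there
  have key : ∀ (f : ℝ → ℝ), (∀ u ∈ I, f u = 0) → ∀ u ∈ I, deriv f u = 0 := by
    intro f hf u hu
    have h : f =ᶠ[nhds u] (fun _ => 0) := by
      filter_upwards [hI.mem_nhds hu] with w hw using hf w hw
    rw [h.deriv_eq, deriv_const]
  -- coefficient extraction
  have coeffs : ∀ u ∈ I,
      (deriv t u + 2 * (x u * deriv y u - y u * deriv x u) = 0) ∧
      (a u * deriv y u - b u * deriv x u = 0) ∧
      (a u * deriv b u - b u * deriv a u = 0) := by
    intro u hu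
    have e0 := heta u hu 0
    have e1 := heta u hu 1
    have em := heta u hu (-1)
    simp only [eta] at e0 e1 em
    norm_num at e0 e1 em
    refine ⟨by linarith, by linarith, by linarith⟩
  -- ȧ = ḃ = 0 on I
  have habd : ∀ u ∈ I, 2 * a u * deriv a u + 2 * b u * deriv b u = 0 := by
    intro u hu
    have H : HasDerivAt (fun w => a w ^ 2 + b w ^ 2 - 1)
        (2 * a u * deriv a u + 2 * b u * deriv b u) u := by
      have h1 := ((ha.differentiable (by simp) u).hasDerivAt.pow 2)
      have h2 := ((hb.differentiable (by simp) u).hasDerivAt.pow 2)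
      have := (h1.add h2).sub_const 1
      refine this.congr_deriv ?_
      push_cast
      ring
    have hz := key (fun w => a w ^ 2 + b w ^ 2 - 1)
      (fun w hw => by simp [hab w hw]) u hu
    rw [H.deriv] at hz
    linarith
  have hadot : ∀ u ∈ I, deriv a u = 0 ∧ deriv b u = 0 := by
    intro u hu
    have h1 := habd u hu
    have h2 := (coeffs u hu).2.2
    have h3 := hab u hu
    constructor
    · linear_combination (a u / 2) * h1 - b u * h2 - deriv a u * h3
    · linear_combination (b u / 2) * h1 + a u * h2 - deriv b u * h3
  intro s hs
  obtain ⟨c0, cA, cB⟩ := coeffs s hs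
  have h1 := hab s hs
  have h2 := hunit s hs
  -- (i)
  have part1 : deriv t s = 2 * (y s * deriv x s - x s * deriv y s) := by linarith
  -- d = aẋ + bẏ
  set d := a s * deriv x s + b s * deriv y s with hd_def
  have hd2 : d ^ 2 = 1 := by
    have : d ^ 2 + (a s * deriv y s - b s * deriv x s) ^ 2 =
        (a s ^ 2 + b s ^ 2) * (deriv x s ^ 2 + deriv y s ^ 2) := by ring
    rw [cA, h1, h2] at this
    linarith [this]
  have hdd : d = 1 ∨ d = -1 := by
    have hfac : (d - 1) * (d + 1) = 0 := by linear_combination hd2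
    rcases mul_eq_zero.mp hfac with h | h
    · left; linarith
    · right; linarith
  have part2 : (a s = deriv x s ∧ b s = deriv y s) ∨
      (a s = -deriv x s ∧ b s = -deriv y s) := by
    rcases hdd with h | h
    · left
      constructor
      · linear_combination deriv x s * h + deriv y s * cA - a s * h2
      · linear_combination deriv y s * h - deriv x s * cA - b s * h2
    · right
      constructor
      · linear_combination deriv x s * h + deriv y s * cA - a s * h2
      · linear_combination deriv y s * h - deriv x s * cA - b s * h2
  -- second derivative facts
  have hxdd : deriv x s * deriv (deriv x) s + deriv y s * deriv (deriv y) s = 0 := by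
    have H : HasDerivAt (fun w => deriv x w ^ 2 + deriv y w ^ 2 - 1)
        (2 * deriv x s * deriv (deriv x) s + 2 * deriv y s * deriv (deriv y) s) s := by
      have h1' := ((hdx'.differentiable (by norm_num) s).hasDerivAt.pow 2)
      have h2' := ((hdy'.differentiable (by norm_num) s).hasDerivAt.pow 2)
      have := (h1'.add h2').sub_const 1
      refine this.congr_deriv ?_
      push_cast
      ring
    have hz := key (fun w => deriv x w ^ 2 + deriv y w ^ 2 - 1)
      (fun w hw => by simp [hunit w hw]) s hs
    rw [H.deriv] at hz
    linarith
  have hcross : a s * deriv (deriv y) s - b s * deriv (deriv x) s = 0 := by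
    have H : HasDerivAt (fun w => a w * deriv y w - b w * deriv x w)
        (deriv a s * deriv y s + a s * deriv (deriv y) s
          - (deriv b s * deriv x s + b s * deriv (deriv x) s)) s := by
      have h1' := (ha.differentiable (by simp) s).hasDerivAt.mul
        (hdy'.differentiable (by norm_num) s).hasDerivAt
      have h2' := (hb.differentiable (by simp) s).hasDerivAt.mul
        (hdx'.differentiable (by norm_num) s).hasDerivAt
      exact h1'.sub h2'
    have hz := key (fun w => a w * deriv y w - b w * deriv x w)
      (fun w hw => (coeffs w hw).2.1) s hs
    rw [H.deriv] at hz
    obtain ⟨ea, eb⟩ := hadot s hs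
    rw [ea, eb] at hz
    linarith
  have hxy2 : deriv x s * deriv (deriv y) s = deriv y s * deriv (deriv x) s := by
    rcases part2 with ⟨ea, eb⟩ | ⟨ea, eb⟩ <;> rw [ea, eb] at hcross <;> linarith
  constructor
  · exact part1
  refine ⟨part2, ?_, ?_⟩
  · linear_combination deriv x s * hxdd - deriv y s * hxy2 - deriv (deriv x) s * h2
  · linear_combination deriv y s * hxdd + deriv x s * hxy2 - deriv (deriv y) s * h2
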